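/- Let x, m, v, y be non-zero real numbers with m² = (3/2)x², v² = (3/2)x² and y² = x², and let 𝔫 be the 5-dimensional real Lie algebra with orthonormal basis {E₁,…,E₅} and non-zero brackets [E₁,E₂] = m·E₃, [E₁,E₃] = v·E₄, [E₁,E₄] = x·E₅, [E₂,E₃] = y·E₅. Then the diagonal endomorphism D defined by D(E₁) = (3/4)x²·E₁, D(E₂) = (3/2)x²·E₂, D(E₃) = (9/4)x²·E₃, D(E₄) = 3x²·E₄, D(E₅) = (15/4)x²·E₅ is a derivation of 𝔫, and Ric = −(11/4)x²·Id + D. -/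

import Mathlib

/-! Everything is diagonal in the basis `E`. Expanding the two sums in the Ricci formula for this
bracket shows that `Ric` is diagonal with entries `-(m²+v²+x²)/2, -(m²+y²)/2, (m²-v²-y²)/2,
(v²-x²)/2, (x²+y²)/2`, and a diagonal map is a derivation as soon as its eigenvalues add up
along the four brackets. The eigenvalues of `D` are `(3/4)x²·(1,2,3,4,5)`, and under the relations
`m² = v² = (3/2)x²`, `y² = x²` the entries of `Ric - D` all equal `-(11/4)x²`. -/

open scoped BigOperators

namespace Nilsoliton9

noncomputable section

abbrev V : Type := Fin 5 → ℝ

/-- The orthonormal basis vectors E₁,…,E₅ (indexed 0,…,4). -/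
def E (i : Fin 5) : V := Pi.single i 1

/-- The inner product making `E` an orthonormal basis. -/
def ip (x y : V) : ℝ := ∑ i, x i * y i

/-- `D` is a derivation of the bracket `br`. -/
def IsDerivation (br : V → V → V) (D : V →ₗ[ℝ] V) : Prop :=
  ∀ X Y : V, D (br X Y) = br (D X) Y + br X (D Y)

/-- `Ric` is the Ricci operator of the nilpotent Lie group with left-invariant
metric determined by the bracket `br` and the orthonormal basis `E`. -/
def IsRicci (br : V → V → V) (Ric : V →ₗ[ℝ] V) : Prop :=
  ∀ X Y : V, ip (Ric X) Y =
      -(1/2) * (∑ i : Fin 5, ip (br X (E i)) (br Y (E i)))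
      + (1/4) * (∑ i : Fin 5, ∑ j : Fin 5, ip (br (E i) (E j)) X * ip (br (E i) (E j)) Y)

/-- The bracket: [E₁,E₂] = m·E₃, [E₁,E₃] = v·E₄, [E₁,E₄] = x·E₅, [E₂,E₃] = y·E₅. -/
def br (m v x y : ℝ) (X Y : V) : V :=
  (m * (X 0 * Y 1 - X 1 * Y 0)) • E 2 + (v * (X 0 * Y 2 - X 2 * Y 0)) • E 3 + (x * (X 0 * Y 3 - X 3 * Y 0) + y * (X 1 * Y 2 - X 2 * Y 1)) • E 4

open Matrix

lemma ip_E (X : V) (j : Fin 5) : ip X (E j) = X j := by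
  simp [ip, E, Pi.single_apply]

lemma ip_toLin'_diagonal (d X Y : V) :
    ip (toLin' (diagonal d) X) Y = ∑ i, d i * X i * Y i := by
  simp [ip, mulVec_diagonal]

lemma IsRicci.unique {br : V → V → V} {R₁ R₂ : V →ₗ[ℝ] V} (h₁ : IsRicci br R₁)
    (h₂ : IsRicci br R₂) : R₁ = R₂ :=
  LinearMap.ext fun X => funext fun j => by rw [← ip_E (R₁ X), ← ip_E (R₂ X), h₁, h₂]

lemma eq_toLin'_diagonal_of_apply_E {D : V →ₗ[ℝ] V} {d : V} (hD : ∀ i, D (E i) = d i • E i) :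
    D = toLin' (diagonal d) :=
  (Pi.basisFun ℝ (Fin 5)).ext fun i => by
    rw [Pi.basisFun_apply]
    change D (E i) = _
    rw [hD]
    funext j
    by_cases hj : j = i
    · subst hj
      simp [E, mulVec_diagonal]
    · simp [E, mulVec_diagonal, hj]

lemma smul_id_add_toLin'_diagonal (c : ℝ) (d : V) :
    c • LinearMap.id + toLin' (diagonal d) = toLin' (diagonal (fun i => c + d i)) := by
  refine LinearMap.ext fun X => funext fun j => ?_
  simp [mulVec_diagonal, add_mul]

section

variable (m v x y : ℝ)

lemma sum_ip_br_E (X Y : V) :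
    ∑ k : Fin 5, ip (br m v x y X (E k)) (br m v x y Y (E k)) =
      m^2*(X 0*Y 0 + X 1*Y 1) + v^2*(X 0*Y 0 + X 2*Y 2) + x^2*(X 0*Y 0 + X 3*Y 3)
        + y^2*(X 1*Y 1 + X 2*Y 2) := by
  simp only [ip, br, E, Fin.sum_univ_five, Pi.add_apply, Pi.smul_apply, smul_eq_mul, Pi.single_apply,
    Fin.reduceEq, ↓reduceIte]
  ring

lemma sum_ip_br_E_E (X Y : V) :
    ∑ k : Fin 5, ∑ l : Fin 5, ip (br m v x y (E k) (E l)) X * ip (br m v x y (E k) (E l)) Y =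
      2*(m^2 * (X 2*Y 2) + v^2 * (X 3*Y 3) + (x^2+y^2) * (X 4*Y 4)) := by
  simp only [ip, br, E, Fin.sum_univ_five, Pi.add_apply, Pi.smul_apply, smul_eq_mul, Pi.single_apply,
    Fin.reduceEq, ↓reduceIte]
  ring

lemma isRicci_br : IsRicci (br m v x y) (toLin' (diagonal
    ![-(m^2 + v^2 + x^2)/2, -(m^2 + y^2)/2, (m^2 - v^2 - y^2)/2, (v^2 - x^2)/2, (x^2 + y^2)/2])) := by
  intro X Y
  rw [ip_toLin'_diagonal, sum_ip_br_E, sum_ip_br_E_E]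
  simp only [Fin.sum_univ_five, cons_val_zero, cons_val_one, cons_val]
  ring

lemma isDerivation_br_toLin'_diagonal {d : V} (h2 : d 2 = d 0 + d 1) (h3 : d 3 = d 0 + d 2)
    (h40 : d 4 = d 0 + d 3) (h41 : d 4 = d 1 + d 2) :
    IsDerivation (br m v x y) (toLin' (diagonal d)) := by
  intro X Y
  funext j
  fin_cases j <;> simp only [Fin.zero_eta, Fin.mk_one, Fin.reduceFinMk, br, E, toLin'_apply,
    mulVec_diagonal, Pi.add_apply, Pi.smul_apply, smul_eq_mul, Pi.single_apply, Fin.isValue,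
    Fin.reduceEq, ↓reduceIte]
  · ring
  · ring
  · linear_combination m * (X 0 * Y 1 - X 1 * Y 0) * h2
  · linear_combination v * (X 0 * Y 2 - X 2 * Y 0) * h3
  · linear_combination x * (X 0 * Y 3 - X 3 * Y 0) * h40 + y * (X 1 * Y 2 - X 2 * Y 1) * h41

end

theorem stmt9_general (x m v y : ℝ) (hm2 : m ^ 2 = (3/2) * x ^ 2) (hv2 : v ^ 2 = (3/2) * x ^ 2) (hy2 : y ^ 2 = x ^ 2)
    (Ric : V →ₗ[ℝ] V) (hRic : IsRicci (br m v x y) Ric)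
    (D : V →ₗ[ℝ] V)
    (hD0 : D (E 0) = ((3/4) * x ^ 2) • E 0)
    (hD1 : D (E 1) = ((3/2) * x ^ 2) • E 1)
    (hD2 : D (E 2) = ((9/4) * x ^ 2) • E 2)
    (hD3 : D (E 3) = (3 * x ^ 2) • E 3)
    (hD4 : D (E 4) = ((15/4) * x ^ 2) • E 4) :
    IsDerivation (br m v x y) D ∧
    Ric = (-(11/4) * x ^ 2) • (LinearMap.id : V →ₗ[ℝ] V) + D := by
  obtain rfl : D = toLin' (diagonal ![(3/4) * x^2, (3/2) * x^2, (9/4) * x^2, 3 * x^2, (15/4) * x^2]) :=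
    eq_toLin'_diagonal_of_apply_E fun i => by fin_cases i <;> assumption
  refine ⟨isDerivation_br_toLin'_diagonal m v x y (by simp; ring) (by simp; ring) (by simp; ring)
    (by simp; ring), ?_⟩
  rw [hRic.unique (isRicci_br m v x y), smul_id_add_toLin'_diagonal]
  congr 2
  funext i
  fin_cases i <;> simp [hm2, hv2, hy2] <;> ring

theorem stmt9 (x m v y : ℝ) (hx : x ≠ 0) (hm : m ≠ 0) (hv : v ≠ 0) (hy : y ≠ 0) (hm2 : m ^ 2 = (3/2) * x ^ 2) (hv2 : v ^ 2 = (3/2) * x ^ 2) (hy2 : y ^ 2 = x ^ 2)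
    (Ric : V →ₗ[ℝ] V) (hRic : IsRicci (br m v x y) Ric)
    (D : V →ₗ[ℝ] V)
    (hD0 : D (E 0) = ((3/4) * x ^ 2) • E 0)
    (hD1 : D (E 1) = ((3/2) * x ^ 2) • E 1)
    (hD2 : D (E 2) = ((9/4) * x ^ 2) • E 2)
    (hD3 : D (E 3) = (3 * x ^ 2) • E 3)
    (hD4 : D (E 4) = ((15/4) * x ^ 2) • E 4) :
    IsDerivation (br m v x y) D ∧
    Ric = (-(11/4) * x ^ 2) • (LinearMap.id : V →ₗ[ℝ] V) + D :=
  stmt9_general x m v y hm2 hv2 hy2 Ric hRic D hD0 hD1 hD2 hD3 hD4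
end

end Nilsoliton9
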